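/- arXiv:2302.00448 — 5 statements merged into one kernel-verified Lean document; each statement's English description precedes it below -/
import Mathlib

section
/- Let δ₁, δ₂, … be a sequence of real numbers tending to 0. Let W = {x ∈ ℝ | there exist infinitely many rationals q with |x − q| < δ_{denom(q)}}. Then W is almost equal (with respect to Lebesgue measure) to either the empty set or all of ℝ. -/
/-!
Real numbers that are well approximable by rationals with denominator `n` are exactly the lifts of
points of the unit circle lying within `δ n` of a point of additive order `n`, since the points of
order `n` are the images of the rationals with denominator `n`. So the set in question is the
preimage under `ℝ → ℝ/ℤ` of `addWellApproximable UnitAddCircle δ`, to which Gallagher's ergodic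
theorem `AddCircle.addWellApproximable_ae_empty_or_univ` applies; the covering map pulls null sets
back to null sets.
-/

open MeasureTheory Filter

theorem AddCircle.quasiMeasurePreserving_coe (T : ℝ) [Fact (0 < T)] :
    Measure.QuasiMeasurePreserving ((↑) : ℝ → AddCircle T) volume volume := by
  refine ⟨measurable_quotient_mk'', ?_⟩
  have := (isAddFundamentalDomain_Ioc' (Fact.out : 0 < T) 0).absolutelyContinuous_map
  rwa [(AddCircle.measurePreserving_mk T 0).map_eq] at this

namespace UnitAddCircle

theorem addOrderOf_eq_iff_exists_rat {n : ℕ} (hn : 0 < n) {y : UnitAddCircle} :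
    addOrderOf y = n ↔ ∃ q : ℚ, q.den = n ∧ ((q : ℝ) : UnitAddCircle) = y := by
  constructor
  · intro hy
    obtain ⟨m, -, hmn, rfl⟩ := (AddCircle.addOrderOf_eq_pos_iff hn).mp hy
    refine ⟨(m : ℚ) / n, ?_, by push_cast; rw [mul_one]⟩
    have hden := Rat.den_div_eq_of_coprime (a := m) (b := n) (by omega) hmn
    rw [Int.cast_natCast, Int.cast_natCast] at hden
    exact_mod_cast hden
  · rintro ⟨q, rfl, rfl⟩
    simpa using AddCircle.addOrderOf_coe_rat (p := (1 : ℝ)) (q := q)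

theorem coe_mem_approxAddOrderOf_iff {n : ℕ} (hn : 0 < n) {x d : ℝ} :
    (x : UnitAddCircle) ∈ approxAddOrderOf UnitAddCircle n d ↔
      ∃ q : ℚ, q.den = n ∧ |x - q| < d := by
  simp only [mem_approx_add_orderOf_iff, addOrderOf_eq_iff_exists_rat hn, Metric.mem_ball,
    dist_eq_norm]
  constructor
  · rintro ⟨-, ⟨q, rfl, rfl⟩, hxq⟩
    -- the distance to `q` on the circle is the distance to the nearest translate `q + k`
    refine ⟨q + round (x - q), Rat.add_intCast_den q _, ?_⟩
    rw [← AddCircle.coe_sub, UnitAddCircle.norm_eq] at hxq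
    push_cast
    rwa [← sub_sub]
  · rintro ⟨q, rfl, hxq⟩
    refine ⟨_, ⟨q, rfl, rfl⟩, ?_⟩
    rw [← AddCircle.coe_sub]
    exact QuotientAddGroup.norm_mk_le_norm.trans_lt hxq

theorem coe_mem_addWellApproximable_iff (δ : ℕ → ℝ) (x : ℝ) :
    (x : UnitAddCircle) ∈ addWellApproximable UnitAddCircle δ ↔
      {n : ℕ | ∃ q : ℚ, q.den = n ∧ |x - q| < δ n}.Infinite := by
  rw [mem_add_wellApproximable_iff, ← Nat.cofinite_eq_atTop, cofinite.blimsup_set_eq]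
  congr! 2 with n
  ext n
  constructor
  · rintro ⟨hn, hx⟩
    exact (coe_mem_approxAddOrderOf_iff hn).mp hx
  · rintro ⟨q, rfl, hxq⟩
    exact ⟨q.pos, (coe_mem_approxAddOrderOf_iff q.pos).mpr ⟨q, rfl, hxq⟩⟩

end UnitAddCircle

theorem gallagher_reals (δ : ℕ → ℝ) (hδ : Tendsto δ atTop (nhds 0))
    (W : Set ℝ)
    (hW : W = {x : ℝ | {n : ℕ | ∃ q : ℚ, q.den = n ∧ |x - (q : ℝ)| < δ n}.Infinite}) :
    W =ᵐ[volume] (∅ : Set ℝ) ∨ W =ᵐ[volume] (Set.univ : Set ℝ) := by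
  have : Fact ((0 : ℝ) < 1) := ⟨one_pos⟩
  have hW' : W = ((↑) : ℝ → UnitAddCircle) ⁻¹' addWellApproximable UnitAddCircle δ := by
    ext x
    rw [hW, Set.mem_preimage, UnitAddCircle.coe_mem_addWellApproximable_iff, Set.mem_ofPred_eq]
  have hcoe := AddCircle.quasiMeasurePreserving_coe 1
  rcases AddCircle.addWellApproximable_ae_empty_or_univ (T := 1) δ hδ with h | h
  · left
    rw [ae_eq_empty, measure_eq_zero_iff_ae_notMem, hW']
    exact hcoe.ae h
  · right
    rw [ae_eq_univ, measure_eq_zero_iff_ae_notMem, hW']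
    simpa only [Set.mem_compl_iff, Set.mem_preimage, not_not] using hcoe.ae h
end

section
/- Let δ : ℕ → ℝ tend to 0 at infinity. Let 𝕊 = ℝ/ℤ be the additive circle with its Haar (arc-length) probability measure. Define add_well_approximable 𝕊 δ = blimsup over n with 0 < n of the δ_n-thickening of the set of points of additive order exactly n. Then either almost every x ∈ 𝕊 is not well-approximable, or almost every x ∈ 𝕊 is well-approximable. -/
open MeasureTheory Filter

theorem gallagher_circle (δ : ℕ → ℝ) (hδ : Tendsto δ atTop (nhds 0)) :
    (∀ᵐ x : AddCircle (1 : ℝ), ¬ addWellApproximable (AddCircle (1 : ℝ)) δ x) ∨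
      ∀ᵐ x : AddCircle (1 : ℝ), addWellApproximable (AddCircle (1 : ℝ)) δ x :=
  AddCircle.addWellApproximable_ae_empty_or_univ δ hδ
end

section
/- Let X be a metric measurable space with second-countable topology, carrying a locally finite doubling Borel measure μ. Let S ⊆ X and K ∈ ℝ. Then for μ-almost every x in S: for every index type ι with filter l, and every family of points w : ι → X and radii δ : ι → ℝ with δ tending to 0 from above along l and x ∈ closed_ball (w j) (K·δ j) eventually along l, the ratio μ(S ∩ closed_ball (w j) (δ j)) / μ(closed_ball (w j) (δ j)) tends to 1 along l. -/
open MeasureTheory Metric Filter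

theorem density_theorem_doubling {α : Type*} [MetricSpace α] [MeasurableSpace α]
    (μ : Measure α) [IsUnifLocDoublingMeasure μ] [SecondCountableTopology α] [BorelSpace α]
    [IsLocallyFiniteMeasure μ] (S : Set α) (K : ℝ) :
    ∀ᵐ x ∂μ.restrict S,
      ∀ {ι : Type} {l : Filter ι} (w : ι → α) (δ : ι → ℝ),
        Tendsto δ l (nhdsWithin (0 : ℝ) (Set.Ioi 0)) →
        (∀ᶠ j in l, x ∈ closedBall (w j) (K * δ j)) →
        Tendsto (fun j => μ (S ∩ closedBall (w j) (δ j)) / μ (closedBall (w j) (δ j))) l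
          (nhds 1) :=
  IsUnifLocDoublingMeasure.ae_tendsto_measure_inter_div μ S K
end

section
/- Let X be a metric measurable space with second-countable topology carrying a locally finite doubling Borel measure μ. Let p : ℕ → Prop, s : ℕ → set X, M > 0 a real number, and r : ℕ → ℝ with r_n → 0. Then the blimsup over p of the (M·r_n)-thickenings of s_n is almost equal (with respect to μ) to the blimsup over p of the r_n-thickenings of s_n. -/
open MeasureTheory Metric Filter

theorem cassels_lemma {α : Type*} [MetricSpace α] [MeasurableSpace α]
    (μ : Measure α) [IsUnifLocDoublingMeasure μ] [SecondCountableTopology α] [BorelSpace α]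
    [IsLocallyFiniteMeasure μ] (p : ℕ → Prop) (s : ℕ → Set α) {M : ℝ} (hM : 0 < M)
    (r : ℕ → ℝ) (hr : Tendsto r atTop (nhds 0)) :
    (blimsup (fun i => thickening (M * r i) (s i)) atTop p : Set α) =ᵐ[μ]
      (blimsup (fun i => thickening (r i) (s i)) atTop p : Set α) := by
  exact blimsup_thickening_mul_ae_eq μ p s hM r hr
end

section
/- Let s be a null-measurable subset of the additive circle ℝ/(Tℤ), and let u be a family of points of the circle indexed by a nonempty-filtered index type, such that (u i) + s is almost equal to s for every i, and the additive order of u i tends to infinity along the filter. Then s is almost equal to ∅ or to the whole circle. -/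
open MeasureTheory Filter Pointwise

theorem addCircle_ae_empty_or_univ_of_forall_vadd_ae_eq_self (T : ℝ) [hT : Fact (0 < T)]
    {s : Set (AddCircle T)} (hs : NullMeasurableSet s volume)
    {ι : Type*} {l : Filter ι} [l.NeBot] {u : ι → AddCircle T}
    (hu₁ : ∀ i, (u i +ᵥ s : Set (AddCircle T)) =ᵐ[volume] s)
    (hu₂ : Tendsto (addOrderOf ∘ u) l atTop) :
    s =ᵐ[volume] (∅ : Set (AddCircle T)) ∨ s =ᵐ[volume] Set.univ := by
  exact AddCircle.ae_empty_or_univ_of_forall_vadd_ae_eq_self hs hu₁ hu₂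
end
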